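/- arXiv:2510.23309 — 2 statements merged into one kernel-verified Lean document; each statement's English description precedes it below -/
import Mathlib

section
/- Let E be a Banach space, 1 < α < 2, and let S_α, T_α be two families of bounded operators of the form S_α(t) = E_α(t^α A), T_α(t) = E_α(t^α B) with A, B bounded. If A = B then S_α(t) = T_α(t) for all t ≥ 0; conversely, if S_α(t) = T_α(t) for all t ≥ 0 then A = B. -/
/-!
Writing `s = t ^ α`, the family `t ↦ E_α(t ^ α A)` becomes `s ↦ ∑ sⁿ Aⁿ / Γ(1 + nα)`, an entire
power series in `s` (its coefficients are dominated by `‖A‖ⁿ / n!`, since `n! ≤ Γ(1 + nα)` for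
`α ≥ 1`) whose derivative at `s = 0` is `A / Γ(1 + α)`. If the two families agree for `t ≥ 0`, the
two power series agree on `[0, ∞)`, so their one-sided derivatives at `0` coincide and `A = B`.
-/

open Real

/-- Operator-valued one-parameter Mittag-Leffler function. -/
noncomputable def opML {E : Type*} [NormedAddCommGroup E] [NormedSpace ℝ E]
    (α : ℝ) (A : E →L[ℝ] E) (t : ℝ) : E →L[ℝ] E :=
  ∑' n : ℕ, (t ^ ((n : ℝ) * α) / Real.Gamma (1 + n * α)) • A ^ n

lemma factorial_le_Gamma_one_add_nat_mul {α : ℝ} (hα : 1 ≤ α) (n : ℕ) :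
    (n.factorial : ℝ) ≤ Gamma (1 + n * α) := by
  rw [← Gamma_nat_eq_factorial]
  rcases Nat.eq_zero_or_pos n with rfl | hn
  · norm_num
  · have hn : (1 : ℝ) ≤ n := by exact_mod_cast hn
    exact Gamma_strictMonoOn_Ici.monotoneOn (by simp only [Set.mem_Ici]; linarith)
      (by simp only [Set.mem_Ici]; nlinarith) (by nlinarith)

section MittagLefflerSeries

variable {E : Type*} [NormedAddCommGroup E] [NormedSpace ℝ E]

lemma ContinuousLinearMap.norm_pow_le (A : E →L[ℝ] E) (n : ℕ) : ‖A ^ n‖ ≤ ‖A‖ ^ n := by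
  rcases Nat.eq_zero_or_pos n with rfl | hn
  · rw [pow_zero, pow_zero]
    exact ContinuousLinearMap.norm_id_le
  · exact norm_pow_le' A hn

noncomputable def mlCoeff (α : ℝ) (A : E →L[ℝ] E) (n : ℕ) : E →L[ℝ] E :=
  (Gamma (1 + n * α))⁻¹ • A ^ n

noncomputable def mlSeries (α : ℝ) (A : E →L[ℝ] E) :
    FormalMultilinearSeries ℝ ℝ (E →L[ℝ] E) :=
  fun n => ContinuousMultilinearMap.mkPiRing ℝ (Fin n) (mlCoeff α A n)

noncomputable def mlSum (α : ℝ) (A : E →L[ℝ] E) (s : ℝ) : E →L[ℝ] E :=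
  ∑' n : ℕ, s ^ n • mlCoeff α A n

lemma norm_mlCoeff_le {α : ℝ} (hα : 1 ≤ α) (A : E →L[ℝ] E) (n : ℕ) :
    ‖mlCoeff α A n‖ ≤ ‖A‖ ^ n / n.factorial := by
  have hΓ : 0 < Gamma (1 + n * α) := Gamma_pos_of_pos (by positivity)
  calc ‖mlCoeff α A n‖ ≤ (Gamma (1 + n * α))⁻¹ * ‖A‖ ^ n := by
        rw [mlCoeff, norm_smul, norm_inv, norm_of_nonneg hΓ.le]
        gcongr
        exact ContinuousLinearMap.norm_pow_le A n
    _ ≤ (n.factorial : ℝ)⁻¹ * ‖A‖ ^ n := by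
        gcongr
        exact factorial_le_Gamma_one_add_nat_mul hα n
    _ = ‖A‖ ^ n / n.factorial := by ring

variable [CompleteSpace E]

lemma hasSum_mlSum {α : ℝ} (hα : 1 ≤ α) (A : E →L[ℝ] E) (s : ℝ) :
    HasSum (fun n => s ^ n • mlCoeff α A n) (mlSum α A s) := by
  refine (Summable.of_norm_bounded (Real.summable_pow_div_factorial (|s| * ‖A‖))
    fun n => ?_).hasSum
  rw [norm_smul, norm_pow, norm_eq_abs, mul_pow, mul_div_assoc]
  gcongr
  exact norm_mlCoeff_le hα A n

lemma hasFPowerSeriesAt_mlSum {α : ℝ} (hα : 1 ≤ α) (A : E →L[ℝ] E) :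
    HasFPowerSeriesAt (mlSum α A) (mlSeries α A) 0 := by
  rw [hasFPowerSeriesAt_iff]
  filter_upwards with s
  simpa [mlSeries, FormalMultilinearSeries.coeff] using hasSum_mlSum hα A s

lemma hasDerivAt_mlSum_zero {α : ℝ} (hα : 1 ≤ α) (A : E →L[ℝ] E) :
    HasDerivAt (mlSum α A) ((Gamma (1 + α))⁻¹ • A) 0 := by
  simpa [mlSeries, mlCoeff] using (hasFPowerSeriesAt_mlSum hα A).hasDerivAt

end MittagLefflerSeries

lemma opML_eq_mlSum {E : Type*} [NormedAddCommGroup E] [NormedSpace ℝ E] (α : ℝ)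
    (A : E →L[ℝ] E) {t : ℝ} (ht : 0 ≤ t) : opML α A t = mlSum α A (t ^ α) := by
  refine tsum_congr fun n => ?_
  rw [mlCoeff, smul_smul, ← rpow_natCast, ← rpow_mul ht, mul_comm α, div_eq_mul_inv]

theorem opML_inj_general {E : Type*} [NormedAddCommGroup E] [NormedSpace ℝ E] [CompleteSpace E]
    (α : ℝ) (hα₁ : 1 < α) (A B : E →L[ℝ] E) :
    (A = B → ∀ t ≥ (0 : ℝ), opML α A t = opML α B t) ∧
    ((∀ t ≥ (0 : ℝ), opML α A t = opML α B t) → A = B) := by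
  refine ⟨fun hAB _ _ => hAB ▸ rfl, fun h => ?_⟩
  have hsum : Set.EqOn (mlSum α A) (mlSum α B) (Set.Ici 0) := fun s (hs : 0 ≤ s) => by
    have ht : 0 ≤ s ^ α⁻¹ := rpow_nonneg hs _
    have := h _ ht
    rwa [opML_eq_mlSum α A ht, opML_eq_mlSum α B ht, rpow_inv_rpow hs (by positivity)] at this
  have hderiv : (Gamma (1 + α))⁻¹ • A = (Gamma (1 + α))⁻¹ • B :=
    (uniqueDiffOn_Ici 0 0 Set.self_mem_Ici).eq_deriv _
      (hasDerivAt_mlSum_zero hα₁.le A).hasDerivWithinAt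
      ((hasDerivAt_mlSum_zero hα₁.le B).hasDerivWithinAt.congr hsum (hsum Set.self_mem_Ici))
  exact smul_right_injective _ (inv_ne_zero (Gamma_pos_of_pos (by positivity)).ne') hderiv

/-- For `1 < α < 2`, two solution operators `S_α(t) = E_α(t^α A)`, `T_α(t) = E_α(t^α B)`
coincide for all `t ≥ 0` if and only if their generators coincide: `A = B` implies
`S_α = T_α`, and conversely. -/
theorem opML_inj {E : Type*} [NormedAddCommGroup E] [NormedSpace ℝ E] [CompleteSpace E]
    (α : ℝ) (hα₁ : 1 < α) (hα₂ : α < 2) (A B : E →L[ℝ] E) :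
    (A = B → ∀ t ≥ (0 : ℝ), opML α A t = opML α B t) ∧
    ((∀ t ≥ (0 : ℝ), opML α A t = opML α B t) → A = B) :=
  opML_inj_general α hα₁ A B
end

section
/- Let 1 < α < 2, let E be a Banach space, A a bounded linear operator on E with ‖A‖ = ω, and u₀ ∈ E. Then u(t) = E_α(t^α A) u₀ satisfies ‖u(t)‖ ≤ C_α (1 + t) exp(ω^{1/α} t) ‖u₀‖ for all t ≥ 0, with C_α depending only on α. -/
/-!
With `m = ⌊s⌋₊`, log-convexity of `Γ` on `[s, s + 1]` gives `m! · s ^ (s - m) ≤ Γ (1 + s)`, hence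
`x ^ s / Γ (1 + s) ≤ x ^ m / m! + 2 x ^ (m + 1) / (m + 1)!` for `s ≥ 1`. Taking `s = n α` with
`α ≥ 1`, the map `n ↦ ⌊n α⌋₊` is injective, so both majorising series are subseries of
`∑ x ^ k / k! = exp x`. With `x = ‖A‖ ^ (1 / α) t` and `‖A ^ n‖ ≤ ‖A‖ ^ n` this bounds
`‖E_α(t ^ α A)‖` by `3 exp (‖A‖ ^ (1 / α) t)`.
-/

open Real

theorem strictMono_floor_natCast_mul {α : ℝ} (hα : 1 ≤ α) :
    StrictMono fun n : ℕ => ⌊(n : ℝ) * α⌋₊ := by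
  refine strictMono_nat_of_lt_succ fun n => ?_
  have hnα : 0 ≤ (n : ℝ) * α := by positivity
  calc ⌊(n : ℝ) * α⌋₊ < ⌊(n : ℝ) * α + 1⌋₊ := by rw [Nat.floor_add_one hnα]; omega
    _ ≤ ⌊((n + 1 : ℕ) : ℝ) * α⌋₊ := Nat.floor_le_floor (by push_cast; linarith)

namespace Real

open Nat

theorem Gamma_add_one_sub_mul_rpow_le_Gamma_add_one {x θ : ℝ} (hx : 0 < x) (hθ₀ : 0 ≤ θ)
    (hθ₁ : θ ≤ 1) : Gamma (x + 1 - θ) * x ^ θ ≤ Gamma (x + 1) := by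
  have hx₁ : 0 < x + 1 := by linarith
  have hconv := convexOn_log_Gamma.2 (Set.mem_Ioi.2 hx) (Set.mem_Ioi.2 hx₁) hθ₀
    (sub_nonneg.2 hθ₁) (add_sub_cancel θ 1)
  rw [show θ • x + (1 - θ) • (x + 1) = x + 1 - θ by simp only [smul_eq_mul]; ring] at hconv
  simp only [Function.comp_apply, smul_eq_mul] at hconv
  have hlog_Gamma : log (Gamma x) = log (Gamma (x + 1)) - log x := by
    rw [Gamma_add_one hx.ne', log_mul hx.ne' (Gamma_pos_of_pos hx).ne']
    ring
  have hpos : 0 < Gamma (x + 1 - θ) := Gamma_pos_of_pos (by linarith)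
  rw [← log_le_log_iff (by positivity) (Gamma_pos_of_pos hx₁), log_mul hpos.ne'
    (rpow_pos_of_pos hx θ).ne', log_rpow hx]
  rw [hlog_Gamma] at hconv
  linarith

theorem rpow_div_Gamma_one_add_le {s x : ℝ} (hs : 1 ≤ s) (hx : 0 ≤ x) :
    x ^ s / Gamma (1 + s) ≤ x ^ ⌊s⌋₊ / ⌊s⌋₊ ! + 2 * (x ^ (⌊s⌋₊ + 1) / (⌊s⌋₊ + 1)!) := by
  set m := ⌊s⌋₊
  set θ := s - m
  have hs₀ : 0 < s := by linarith
  have hm : (m : ℝ) ≤ s := Nat.floor_le hs₀.le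
  have hθ₁ : θ ≤ 1 := by linarith [Nat.lt_floor_add_one s]
  have hθ₀ : 0 ≤ θ := sub_nonneg.2 hm
  have hGamma_pos : 0 < Gamma (1 + s) := Gamma_pos_of_pos (by linarith)
  have hGamma : (m ! : ℝ) * s ^ θ ≤ Gamma (1 + s) := by
    have h := Gamma_add_one_sub_mul_rpow_le_Gamma_add_one hs₀ hθ₀ hθ₁
    rwa [show s + 1 - θ = m + 1 by ring, Gamma_nat_eq_factorial, add_comm s] at h
  rcases hx.eq_or_lt with rfl | hx₀
  · rw [zero_rpow (by linarith), zero_div]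
    positivity
  have hsplit : x ^ s = x ^ m * x ^ θ := by
    rw [← rpow_natCast, ← rpow_add hx₀, add_sub_cancel]
  have hpow_le : (x / s) ^ θ ≤ 1 + x / s := by
    rcases le_total (x / s) 1 with h | h
    · linarith [rpow_le_one (by positivity) h hθ₀, div_nonneg hx hs₀.le]
    · linarith [rpow_le_self_of_one_le h hθ₁]
  have hfact : ((m + 1)! : ℝ) ≤ 2 * (m ! * s) := by
    have hm_succ : (m : ℝ) + 1 ≤ 2 * s := by linarith
    rw [Nat.factorial_succ, Nat.cast_mul, Nat.cast_succ]
    nlinarith [mul_le_mul_of_nonneg_right hm_succ (Nat.cast_nonneg (α := ℝ) m !)]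
  calc x ^ s / Gamma (1 + s) ≤ x ^ m / m ! * (x / s) ^ θ := by
        rw [div_le_iff₀ hGamma_pos, hsplit, div_rpow hx hs₀.le]
        calc x ^ m * x ^ θ = x ^ m / m ! * (x ^ θ / s ^ θ) * (m ! * s ^ θ) := by
              field_simp
          _ ≤ _ := by gcongr
    _ ≤ x ^ m / m ! * (1 + x / s) := by gcongr
    _ = x ^ m / m ! + x ^ (m + 1) / (m ! * s) := by
        rw [pow_succ]
        field_simp
    _ ≤ x ^ m / m ! + 2 * (x ^ (m + 1) / (m + 1)!) := by
        rw [← le_sub_iff_add_le', add_sub_cancel_left, mul_div_assoc']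
        rw [div_le_div_iff₀ (by positivity) (by positivity)]
        nlinarith [pow_pos hx₀ (m + 1)]

theorem tsum_pow_comp_div_factorial_le_exp {m : ℕ → ℕ} (hm : Function.Injective m) {x : ℝ}
    (hx : 0 ≤ x) : ∑' n, x ^ m n / (m n)! ≤ exp x := by
  rw [exp_eq_exp_ℝ, NormedSpace.exp_eq_tsum_div]
  exact (summable_pow_div_factorial x).comp_injective hm |>.tsum_le_tsum_of_inj m hm
    (fun _ _ => by positivity) (fun _ => le_rfl) (summable_pow_div_factorial x)

section MittagLefflerSeries

variable {α x : ℝ}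

theorem rpow_natCast_mul_div_Gamma_le (hα : 1 ≤ α) (hx : 0 ≤ x) (n : ℕ) :
    x ^ ((n : ℝ) * α) / Gamma (1 + n * α) ≤
      x ^ ⌊(n : ℝ) * α⌋₊ / ⌊(n : ℝ) * α⌋₊ ! +
        2 * (x ^ (⌊(n : ℝ) * α⌋₊ + 1) / (⌊(n : ℝ) * α⌋₊ + 1)!) := by
  rcases n.eq_zero_or_pos with rfl | hn
  · simp only [CharP.cast_eq_zero, zero_mul, rpow_zero, add_zero, Gamma_one, Nat.floor_zero,
      pow_zero, factorial_zero, cast_one, div_one, zero_add, pow_one, factorial_one]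
    linarith
  · exact rpow_div_Gamma_one_add_le (one_le_mul_of_one_le_of_one_le (by exact_mod_cast hn) hα) hx

theorem summable_rpow_natCast_mul_div_Gamma (hα : 1 ≤ α) (hx : 0 ≤ x) :
    Summable fun n : ℕ => x ^ ((n : ℝ) * α) / Gamma (1 + n * α) := by
  have hm := (strictMono_floor_natCast_mul hα).injective
  refine .of_nonneg_of_le (fun n => ?_) (rpow_natCast_mul_div_Gamma_le hα hx) ?_
  · exact div_nonneg (rpow_nonneg hx _) (Gamma_pos_of_pos (by positivity)).le
  · exact ((summable_pow_div_factorial x).comp_injective hm).add <|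
      ((summable_pow_div_factorial x).comp_injective (succ_injective.comp hm)).mul_left 2

theorem tsum_rpow_natCast_mul_div_Gamma_le (hα : 1 ≤ α) (hx : 0 ≤ x) :
    ∑' n : ℕ, x ^ ((n : ℝ) * α) / Gamma (1 + n * α) ≤ 3 * exp x := by
  have hm := (strictMono_floor_natCast_mul hα).injective
  have hsum := (summable_pow_div_factorial x).comp_injective hm
  have hsum_succ := (summable_pow_div_factorial x).comp_injective (succ_injective.comp hm)
  calc _ ≤ ∑' n : ℕ, (x ^ ⌊(n : ℝ) * α⌋₊ / ⌊(n : ℝ) * α⌋₊ ! +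
          2 * (x ^ (⌊(n : ℝ) * α⌋₊ + 1) / (⌊(n : ℝ) * α⌋₊ + 1)!)) :=
        (summable_rpow_natCast_mul_div_Gamma hα hx).tsum_le_tsum
          (rpow_natCast_mul_div_Gamma_le hα hx) (hsum.add (hsum_succ.mul_left 2))
    _ = ∑' n : ℕ, x ^ ⌊(n : ℝ) * α⌋₊ / ⌊(n : ℝ) * α⌋₊ ! +
          2 * ∑' n : ℕ, x ^ (⌊(n : ℝ) * α⌋₊ + 1) / (⌊(n : ℝ) * α⌋₊ + 1)! :=
        (hsum.tsum_add (hsum_succ.mul_left 2)).trans (congrArg _ tsum_mul_left)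
    _ ≤ exp x + 2 * exp x := by
        gcongr
        · exact tsum_pow_comp_div_factorial_le_exp hm hx
        · exact tsum_pow_comp_div_factorial_le_exp (succ_injective.comp hm) hx
    _ = 3 * exp x := by ring

end MittagLefflerSeries

end Real

theorem norm_opML_le {E : Type*} [NormedAddCommGroup E] [NormedSpace ℝ E] {α t : ℝ} (hα : 1 ≤ α)
    (ht : 0 ≤ t) (A : E →L[ℝ] E) : ‖opML α A t‖ ≤ 3 * exp (‖A‖ ^ (1 / α) * t) := by
  set x := ‖A‖ ^ (1 / α) * t
  have hx : 0 ≤ x := by positivity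
  have hx_rpow (n : ℕ) : x ^ ((n : ℝ) * α) = t ^ ((n : ℝ) * α) * ‖A‖ ^ n := by
    rw [mul_rpow (by positivity) ht, ← rpow_mul (norm_nonneg A),
      one_div_mul_eq_div, mul_div_cancel_right₀ _ (by linarith), rpow_natCast, mul_comm]
  have hnorm_pow (n : ℕ) : ‖A ^ n‖ ≤ ‖A‖ ^ n := by
    rcases n.eq_zero_or_pos with rfl | hn
    · exact ContinuousLinearMap.norm_id_le
    · exact norm_pow_le' A hn
  have hterm (n : ℕ) : ‖(t ^ ((n : ℝ) * α) / Gamma (1 + n * α)) • A ^ n‖ ≤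
      x ^ ((n : ℝ) * α) / Gamma (1 + n * α) := by
    have hcoeff : 0 ≤ t ^ ((n : ℝ) * α) / Gamma (1 + n * α) :=
      div_nonneg (rpow_nonneg ht _) (Gamma_pos_of_pos (by positivity)).le
    rw [norm_smul, norm_of_nonneg hcoeff, hx_rpow, mul_div_right_comm]
    exact mul_le_mul_of_nonneg_left (hnorm_pow n) hcoeff
  exact (tsum_of_norm_bounded (Real.summable_rpow_natCast_mul_div_Gamma hα hx).hasSum hterm).trans
    (Real.tsum_rpow_natCast_mul_div_Gamma_le hα hx)

theorem opML_growth_general {E : Type*} [NormedAddCommGroup E] [NormedSpace ℝ E]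
    (α : ℝ) (hα₁ : 1 < α) :
    ∃ C > (0 : ℝ), ∀ (A : E →L[ℝ] E) (u₀ : E) (t : ℝ), 0 ≤ t →
      ‖opML α A t u₀‖ ≤ C * (1 + t) * Real.exp (‖A‖ ^ (1 / α) * t) * ‖u₀‖ := by
  refine ⟨3, by norm_num, fun A u₀ t ht => ?_⟩
  calc ‖opML α A t u₀‖ ≤ ‖opML α A t‖ * ‖u₀‖ := (opML α A t).le_opNorm u₀
    _ ≤ 3 * exp (‖A‖ ^ (1 / α) * t) * ‖u₀‖ := by gcongr; exact norm_opML_le hα₁.le ht A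
    _ ≤ 3 * (1 + t) * exp (‖A‖ ^ (1 / α) * t) * ‖u₀‖ := by
        gcongr ?_ * _
        nlinarith [exp_pos (‖A‖ ^ (1 / α) * t)]

/-- For `1 < α < 2` there is `C_α > 0` such that `u(t) = E_α(t^α A) u₀` satisfies
`‖u(t)‖ ≤ C_α (1+t) exp(‖A‖^{1/α} t) ‖u₀‖` for all bounded `A`, `u₀` and `t ≥ 0`. -/
theorem opML_growth {E : Type*} [NormedAddCommGroup E] [NormedSpace ℝ E] [CompleteSpace E]
    (α : ℝ) (hα₁ : 1 < α) (hα₂ : α < 2) :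
    ∃ C > (0 : ℝ), ∀ (A : E →L[ℝ] E) (u₀ : E) (t : ℝ), 0 ≤ t →
      ‖opML α A t u₀‖ ≤ C * (1 + t) * Real.exp (‖A‖ ^ (1 / α) * t) * ‖u₀‖ :=
  opML_growth_general α hα₁
end
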